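/- arXiv:1812.05753 — 3 statements merged into one kernel-verified Lean document; each statement's English description precedes it below -/
import Mathlib

section
/- The dual-real derivative at a point is unique: if λ₁ and λ₂ are ℝ[ε]-module maps ℝ[ε]ⁿ → ℝ[ε]ᵐ both satisfying ‖f(x)-f(a)-λᵢ(x-a)‖/‖x-a‖ → 0 as x → a, then λ₁ = λ₂. -/
noncomputable section

abbrev D : Type := DualNumber ℝ

def dnorm {n : ℕ} (x : Fin n → D) : ℝ :=
  Real.sqrt (2 * ∑ i, (x i).fst ^ 2 + ∑ i, (x i).snd ^ 2)

/-- `f` is dual-real differentiable at `a` with dual real derivative the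
`ℝ[ε]`-module map `lam`. -/
def HasDD {n m : ℕ} (f : (Fin n → D) → (Fin m → D))
    (lam : (Fin n → D) →ₗ[D] (Fin m → D)) (a : Fin n → D) : Prop :=
  ∀ e : ℝ, 0 < e → ∃ d : ℝ, 0 < d ∧ ∀ x : Fin n → D,
    0 < dnorm (x - a) → dnorm (x - a) < d →
      dnorm (f x - f a - lam (x - a)) < e * dnorm (x - a)

/-!
Scaling real parts by `√2` turns `dnorm` into the Euclidean norm, so `(Fin n → ℝ[ε])` with `dnorm`
is isometric, as a real vector space, to a Euclidean space. An `ℝ[ε]`-module map is in particular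
`ℝ`-linear, and `HasDD f lam a` says exactly that the transported `f` has Fréchet derivative the
transported `lam` at the transported `a`. Fréchet derivatives are unique.
-/

namespace DualVector

open TrivSqZeroExt

def toEuclidean (ι : Type*) [Fintype ι] : (ι → D) ≃ₗ[ℝ] EuclideanSpace ℝ (ι ⊕ ι) where
  toFun x := WithLp.toLp 2 (Sum.elim (fun i => √2 * (x i).fst) (fun i => (x i).snd))
  invFun y i := inl (y (Sum.inl i) / √2) + inr (y (Sum.inr i))
  map_add' x y := by ext (i | i) <;> simp [mul_add]
  map_smul' r x := by ext (i | i) <;> simp [mul_left_comm]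
  left_inv x := by ext i <;> simp
  right_inv y := by ext (i | i) <;> simp [mul_div_cancel₀]

theorem dnorm_eq_norm_toEuclidean {n : ℕ} (x : Fin n → D) : dnorm x = ‖toEuclidean (Fin n) x‖ := by
  rw [EuclideanSpace.norm_eq, dnorm, Fintype.sum_sum_type, Finset.mul_sum]
  simp [toEuclidean, LinearEquiv.coe_mk, mul_pow]

theorem dnorm_pos {n : ℕ} {x : Fin n → D} (hx : x ≠ 0) : 0 < dnorm x := by
  rwa [dnorm_eq_norm_toEuclidean, norm_pos_iff, LinearEquiv.map_ne_zero_iff]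

end DualVector

open DualVector

def LinearMap.toEuclideanCLM {n m : ℕ} (lam : (Fin n → D) →ₗ[D] (Fin m → D)) :
    EuclideanSpace ℝ (Fin n ⊕ Fin n) →L[ℝ] EuclideanSpace ℝ (Fin m ⊕ Fin m) :=
  LinearMap.toContinuousLinearMap
    ((toEuclidean (Fin n)).arrowCongr (toEuclidean (Fin m)) (lam.restrictScalars ℝ))

theorem LinearMap.toEuclideanCLM_injective {n m : ℕ} :
    Function.Injective (LinearMap.toEuclideanCLM (n := n) (m := m)) :=
  LinearMap.toContinuousLinearMap.injective.comp <|
    (LinearEquiv.injective _).comp (LinearMap.restrictScalars_injective ℝ)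

theorem HasDD.hasFDerivAt {n m : ℕ} {f : (Fin n → D) → (Fin m → D)}
    {lam : (Fin n → D) →ₗ[D] (Fin m → D)} {a : Fin n → D} (h : HasDD f lam a) :
    HasFDerivAt (toEuclidean (Fin m) ∘ f ∘ (toEuclidean (Fin n)).symm) lam.toEuclideanCLM
      (toEuclidean (Fin n) a) := by
  rw [hasFDerivAt_iff_isLittleO_nhds_zero, Asymptotics.isLittleO_iff]
  intro c hc
  obtain ⟨d, hd, hfd⟩ := h c hc
  filter_upwards [Metric.ball_mem_nhds 0 hd] with y hy
  obtain ⟨v, rfl⟩ := (toEuclidean (Fin n)).surjective y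
  simp only [Function.comp_apply, ← map_add, LinearEquiv.symm_apply_apply, LinearMap.toEuclideanCLM,
    LinearMap.coe_toContinuousLinearMap', LinearEquiv.arrowCongr_apply, LinearMap.coe_restrictScalars,
    ← map_sub, ← dnorm_eq_norm_toEuclidean]
  rcases eq_or_ne v 0 with rfl | hv
  · simp [dnorm]
  · rw [mem_ball_zero_iff, ← dnorm_eq_norm_toEuclidean] at hy
    simpa using (hfd (a + v) (by simpa using dnorm_pos hv) (by simpa using hy)).le

theorem dual_derivative_unique {n m : ℕ}
    (f : (Fin n → D) → (Fin m → D)) (a : Fin n → D)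
    (lam₁ lam₂ : (Fin n → D) →ₗ[D] (Fin m → D))
    (h₁ : HasDD f lam₁ a) (h₂ : HasDD f lam₂ a) : lam₁ = lam₂ :=
  LinearMap.toEuclideanCLM_injective (h₁.hasFDerivAt.unique h₂.hasFDerivAt)
end
end

section
/- Chain rule for dual-real differentiation: if f : ℝ[ε]ⁿ → ℝ[ε]ᵐ is dual-real differentiable at a with derivative Df(a), and g : ℝ[ε]ᵐ → ℝ[ε]ᵖ is dual-real differentiable at f(a) with derivative Dg(f(a)), then g∘f is dual-real differentiable at a with derivative Dg(f(a)) ∘ Df(a). -/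
noncomputable section

/-! The dual-real norm is the Euclidean norm of the real coordinates `(√2 · Re xᵢ, Ze xᵢ)`, and
`ℝ[ε]`-linear maps are in particular `ℝ`-linear. Read in these coordinates, dual-real
differentiability is therefore Fréchet differentiability, and the chain rule is the Fréchet
chain rule. -/

theorem hasFDerivAt_iff_forall_lt {𝕜 E F : Type*} [NontriviallyNormedField 𝕜]
    [NormedAddCommGroup E] [NormedSpace 𝕜 E] [NormedAddCommGroup F] [NormedSpace 𝕜 F]
    (f : E → F) (L : E →L[𝕜] F) (a : E) :
    HasFDerivAt f L a ↔ ∀ e : ℝ, 0 < e → ∃ d : ℝ, 0 < d ∧ ∀ x : E,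
      0 < ‖x - a‖ → ‖x - a‖ < d → ‖f x - f a - L (x - a)‖ < e * ‖x - a‖ := by
  rw [hasFDerivAt_iff_tendsto, Metric.tendsto_nhds_nhds]
  refine forall₂_congr fun e he => exists_congr fun d => and_congr_right fun _ => ?_
  refine forall_congr' fun x => ?_
  simp only [dist_eq_norm, sub_zero, norm_mul, norm_inv, norm_norm]
  rcases (norm_nonneg (x - a)).eq_or_lt with h | h
  · simp [← h, he]
  · simp only [h, true_imp_iff, inv_mul_lt_iff₀ h, mul_comm e]

namespace DualReal

def toEuclidean (n : ℕ) : (Fin n → D) ≃ₗ[ℝ] EuclideanSpace ℝ (Fin n × Fin 2) where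
  toFun x := WithLp.toLp 2 fun q => if q.2 = 0 then √2 * (x q.1).fst else (x q.1).snd
  invFun y i := TrivSqZeroExt.inl (y (i, 0) / √2) + TrivSqZeroExt.inr (y (i, 1))
  map_add' x y := by ext q; by_cases q.2 = 0 <;> simp [*, mul_add]
  map_smul' c x := by ext q; by_cases q.2 = 0 <;> simp [*, mul_left_comm]
  left_inv x := by ext i <;> simp
  right_inv y := by ext ⟨i, j⟩; fin_cases j <;> simp [mul_div_cancel₀]

theorem dnorm_eq_norm_toEuclidean {n : ℕ} (x : Fin n → D) : dnorm x = ‖toEuclidean n x‖ := by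
  rw [EuclideanSpace.norm_eq, dnorm, Fintype.sum_prod_type, Finset.mul_sum,
    ← Finset.sum_add_distrib]
  congr 1
  refine Finset.sum_congr rfl fun i _ => ?_
  simp [toEuclidean, Fin.sum_univ_two, mul_pow]

def euclideanMap {n m : ℕ} (f : (Fin n → D) → (Fin m → D)) :
    EuclideanSpace ℝ (Fin n × Fin 2) → EuclideanSpace ℝ (Fin m × Fin 2) :=
  toEuclidean m ∘ f ∘ (toEuclidean n).symm

def euclideanCLM {n m : ℕ} (lam : (Fin n → D) →ₗ[D] (Fin m → D)) :
    EuclideanSpace ℝ (Fin n × Fin 2) →L[ℝ] EuclideanSpace ℝ (Fin m × Fin 2) :=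
  LinearMap.toContinuousLinearMap
    ((toEuclidean m).toLinearMap ∘ₗ lam.restrictScalars ℝ ∘ₗ (toEuclidean n).symm.toLinearMap)

theorem euclideanMap_comp {n m p : ℕ} (f : (Fin n → D) → (Fin m → D))
    (g : (Fin m → D) → (Fin p → D)) : euclideanMap (g ∘ f) = euclideanMap g ∘ euclideanMap f := by
  ext1 y; simp [euclideanMap]

theorem euclideanCLM_comp {n m p : ℕ} (Df : (Fin n → D) →ₗ[D] (Fin m → D))
    (Dg : (Fin m → D) →ₗ[D] (Fin p → D)) :
    euclideanCLM (Dg ∘ₗ Df) = (euclideanCLM Dg).comp (euclideanCLM Df) := by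
  ext1 y; simp [euclideanCLM]

theorem hasDD_iff_hasFDerivAt {n m : ℕ} (f : (Fin n → D) → (Fin m → D))
    (lam : (Fin n → D) →ₗ[D] (Fin m → D)) (a : Fin n → D) :
    HasDD f lam a ↔ HasFDerivAt (euclideanMap f) (euclideanCLM lam) (toEuclidean n a) := by
  rw [hasFDerivAt_iff_forall_lt, HasDD]
  refine forall₂_congr fun e _ => exists_congr fun d => and_congr_right fun _ => ?_
  rw [(toEuclidean n).toEquiv.symm.forall_congr_left]
  simp [euclideanMap, euclideanCLM, ← map_sub, dnorm_eq_norm_toEuclidean]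

end DualReal

/-- Chain rule for dual-real differentiation. -/
theorem dual_chain_rule {n m p : ℕ}
    (f : (Fin n → D) → (Fin m → D)) (g : (Fin m → D) → (Fin p → D))
    (a : Fin n → D)
    (Df : (Fin n → D) →ₗ[D] (Fin m → D)) (Dg : (Fin m → D) →ₗ[D] (Fin p → D))
    (hf : HasDD f Df a) (hg : HasDD g Dg (f a)) :
    HasDD (g ∘ f) (Dg ∘ₗ Df) a := by
  open DualReal in
  rw [hasDD_iff_hasFDerivAt] at hf hg ⊢
  rw [euclideanMap_comp, euclideanCLM_comp]
  have hfa : toEuclidean m (f a) = euclideanMap f (toEuclidean n a) := by simp [euclideanMap]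
  exact (hfa ▸ hg).comp _ hf
end
end

section
/- For a bounded function f : A → ℝ[ε] on a type 1 closed rectangle A, every type 1 lower sum is type-1 less than or equal to every type 1 upper sum: for all partitions P, Q of A, L₁(P,f) ≤₁ U₁(Q,f). -/
noncomputable section

/-- Type 1 (lexicographic) order: `x ≤₁ y`. -/
def le1 (x y : D) : Prop := x.fst < y.fst ∨ (x.fst = y.fst ∧ x.snd ≤ y.snd)

/-- Strict type 1 order: `x <₁ y`. -/
def lt1 (x y : D) : Prop := x.fst < y.fst ∨ (x.fst = y.fst ∧ x.snd < y.snd)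

/-- A partition of the type 1 closed interval `[a, b]₁`. -/
structure Partition1 (a b : D) where
  N : ℕ
  hN : 0 < N
  pts : Fin (N + 1) → D
  first : pts 0 = a
  last : pts (Fin.last N) = b
  mono : ∀ j : Fin N, lt1 (pts j.castSucc) (pts j.succ)

/-- The type 1 closed rectangle `[a¹,b¹]₁ × ⋯ × [aⁿ,bⁿ]₁`. -/
def Rect {n : ℕ} (a b : Fin n → D) : Set (Fin n → D) :=
  {x | ∀ i, le1 (a i) (x i) ∧ le1 (x i) (b i)}

/-- A partition of the type 1 closed rectangle determined by `a` and `b`. -/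
def MPart {n : ℕ} (a b : Fin n → D) : Type := ∀ i, Partition1 (a i) (b i)

/-- The type 1 closed subrectangle of the partition `P` with index `J`. -/
def subrect {n : ℕ} {a b : Fin n → D} (P : MPart a b)
    (J : ∀ i, Fin (P i).N) : Set (Fin n → D) :=
  {x | ∀ i, le1 ((P i).pts (J i).castSucc) (x i) ∧ le1 (x i) ((P i).pts (J i).succ)}

/-- The dual real volume of the subrectangle with index `J`. -/
def vol {n : ℕ} {a b : Fin n → D} (P : MPart a b)
    (J : ∀ i, Fin (P i).N) : D :=
  ∏ i, ((P i).pts (J i).succ - (P i).pts (J i).castSucc)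

/-- The type 1 upper sum `U₁(P, f)`. -/
def U1 {n : ℕ} {a b : Fin n → D} (P : MPart a b) (f : (Fin n → D) → D) : D :=
  ∑ J : (∀ i, Fin (P i).N),
    (TrivSqZeroExt.inl (sSup ((fun x => (f x).fst) '' subrect P J)) +
     TrivSqZeroExt.inr (sSup ((fun x => (f x).snd) '' subrect P J))) * vol P J

/-- The type 1 lower sum `L₁(P, f)`. -/
def L1 {n : ℕ} {a b : Fin n → D} (P : MPart a b) (f : (Fin n → D) → D) : D :=
  ∑ J : (∀ i, Fin (P i).N),
    (TrivSqZeroExt.inl (sInf ((fun x => (f x).fst) '' subrect P J)) +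
     TrivSqZeroExt.inr (sInf ((fun x => (f x).snd) '' subrect P J))) * vol P J

/-!
With the type 1 order, `ℝ[ε]` is a linearly ordered commutative ring (not a strict one:
`ε² = 0`). Instead of passing to a common refinement, couple the two partitions directly: give
the pair (cell `J` of `P`, cell `K` of `Q`) the weight `w J K = ∏ᵢ |Jᵢ ∩ Kᵢ|`, the product of the
lengths of the intersections of their sides. In each coordinate these lengths telescope, so
`∑_K w J K = v(J)` and `∑_J w J K = v(K)`; moreover `w J K ≥₁ 0`, and `w J K ≠ 0` forces the two
cells to share a point `x`, where `inf_J f ≤ f x ≤ sup_K f` in both components. Hence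
`L₁(P,f) = ∑_{J,K} (inf_J f) w J K ≤₁ ∑_{J,K} (sup_K f) w J K = U₁(Q,f)`.
-/

open Finset

def toLexPair : D →+ ℝ ×ₗ ℝ where
  toFun x := toLex (x.fst, x.snd)
  map_zero' := rfl
  map_add' _ _ := rfl

lemma toLexPair_injective : Function.Injective toLexPair := fun _ _ h =>
  TrivSqZeroExt.ext (congrArg (fun z => (ofLex z).1) h) (congrArg (fun z => (ofLex z).2) h)

instance : LinearOrder D := LinearOrder.lift' toLexPair toLexPair_injective

instance : IsOrderedAddMonoid D :=
  Function.Injective.isOrderedAddMonoid toLexPair (map_add _) Iff.rfl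

lemma le1_iff_le {x y : D} : le1 x y ↔ x ≤ y := Prod.Lex.le_iff.symm

lemma lt1_iff_lt {x y : D} : lt1 x y ↔ x < y := Prod.Lex.lt_iff.symm

namespace DualNumber

lemma le_of_fst_le_of_snd_le {x y : D} (hfst : x.fst ≤ y.fst) (hsnd : x.snd ≤ y.snd) :
    x ≤ y := by
  rw [← le1_iff_le]
  rcases hfst.lt_or_eq with h | h
  exacts [Or.inl h, Or.inr ⟨h, hsnd⟩]

lemma nonneg_iff {x : D} : 0 ≤ x ↔ 0 < x.fst ∨ x.fst = 0 ∧ 0 ≤ x.snd :=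
  le1_iff_le.symm.trans (by simp [le1, eq_comm])

instance : ZeroLEOneClass D := ⟨nonneg_iff.2 (Or.inl (by simp))⟩

instance : IsOrderedRing D := .of_mul_nonneg fun x y hx hy => by
  rw [nonneg_iff] at *
  simp only [TrivSqZeroExt.fst_mul, TrivSqZeroExt.snd_mul, smul_eq_mul, op_smul_eq_mul]
  rcases hx with hx | ⟨hx, hx'⟩ <;> rcases hy with hy | ⟨hy, hy'⟩
  · exact Or.inl (mul_pos hx hy)
  · exact Or.inr ⟨by simp [hy], by simp [hy]; positivity⟩
  · exact Or.inr ⟨by simp [hx], by simp [hx]; positivity⟩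
  · exact Or.inr ⟨by simp [hx], by simp [hx, hy]⟩

end DualNumber

lemma Fin.sum_succ_sub_castSucc {G : Type*} [AddCommGroup G] {N : ℕ} (g : Fin (N + 1) → G) :
    ∑ k : Fin N, (g k.succ - g k.castSucc) = g (Fin.last N) - g 0 := by
  induction N with
  | zero => simp
  | succ N ih =>
    rw [Fin.sum_univ_castSucc]
    simp only [Fin.succ_castSucc]
    rw [ih (fun k => g k.castSucc)]
    simp only [Fin.castSucc_zero, Fin.succ_last]
    abel

lemma Finset.sum_mul_le_sum_mul_of_coupling {R ι κ : Type*} [Semiring R] [PartialOrder R]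
    [IsOrderedRing R] [Fintype ι] [Fintype κ] {c : ι → R} {c' : κ → R} {v : ι → R}
    {v' : κ → R} (w : ι → κ → R) (hw : ∀ j k, 0 ≤ w j k) (hv : ∀ j, ∑ k, w j k = v j)
    (hv' : ∀ k, ∑ j, w j k = v' k) (hc : ∀ j k, w j k ≠ 0 → c j ≤ c' k) :
    ∑ j, c j * v j ≤ ∑ k, c' k * v' k := calc
  ∑ j, c j * v j = ∑ j, ∑ k, c j * w j k := by simp_rw [← mul_sum, hv]
  _ ≤ ∑ j, ∑ k, c' k * w j k := by
    refine sum_le_sum fun j _ => sum_le_sum fun k _ => ?_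
    by_cases hjk : w j k = 0
    · simp [hjk]
    · exact mul_le_mul_of_nonneg_right (hc j k hjk) (hw j k)
  _ = ∑ k, c' k * v' k := by rw [sum_comm]; simp_rw [← mul_sum, hv']

section IntervalOverlap

variable {α : Type*} [AddCommGroup α] [LinearOrder α]

def intervalOverlap (x y u v : α) : α := max 0 (min y v - max x u)

lemma intervalOverlap_nonneg (x y u v : α) : 0 ≤ intervalOverlap x y u v := le_max_left _ _

lemma intervalOverlap_comm (x y u v : α) :
    intervalOverlap x y u v = intervalOverlap u v x y := by
  simp only [intervalOverlap, min_comm y, max_comm x]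

variable [IsOrderedAddMonoid α]

lemma nonempty_Icc_inter_of_intervalOverlap_ne_zero {x y u v : α}
    (h : intervalOverlap x y u v ≠ 0) : (Set.Icc x y ∩ Set.Icc u v).Nonempty := by
  have hle : max x u ≤ min y v := by
    by_contra! hlt
    exact h (max_eq_left (sub_nonpos.2 hlt.le))
  exact ⟨max x u, ⟨le_max_left _ _, hle.trans (min_le_left _ _)⟩,
    ⟨le_max_right _ _, hle.trans (min_le_right _ _)⟩⟩

lemma intervalOverlap_eq_sub {x y u v : α} (huv : u ≤ v) :
    intervalOverlap x y u v = max x (min y v) - max x (min y u) := by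
  simp only [intervalOverlap]
  grind

lemma sum_intervalOverlap {N : ℕ} {q : Fin (N + 1) → α} (hq : Monotone q) {x y : α}
    (hx : q 0 ≤ x) (hxy : x ≤ y) (hy : y ≤ q (Fin.last N)) :
    ∑ k : Fin N, intervalOverlap x y (q k.castSucc) (q k.succ) = y - x := by
  simp_rw [intervalOverlap_eq_sub (hq Fin.castSucc_lt_succ.le), Fin.sum_succ_sub_castSucc
    (fun k => max x (min y (q k))), min_eq_left hy, min_eq_right (hx.trans hxy), max_eq_left hx,
    max_eq_right hxy]

end IntervalOverlap

namespace Partition1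

variable {a b : D} (p : Partition1 a b)

lemma monotone_pts : Monotone p.pts :=
  (Fin.strictMono_iff_lt_succ.2 fun j => lt1_iff_lt.1 (p.mono j)).monotone

lemma pts_mem_Icc (j : Fin (p.N + 1)) : p.pts j ∈ Set.Icc a b :=
  ⟨p.first.symm.le.trans (p.monotone_pts (Fin.zero_le j)),
    (p.monotone_pts (Fin.le_last j)).trans p.last.le⟩

end Partition1

section Subrectangles

variable {n : ℕ} {a b : Fin n → D}

lemma mem_subrect_iff {P : MPart a b} {J : ∀ i, Fin (P i).N} {x : Fin n → D} :
    x ∈ subrect P J ↔ ∀ i, x i ∈ Set.Icc ((P i).pts (J i).castSucc) ((P i).pts (J i).succ) := by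
  simp only [subrect, le1_iff_le, Set.mem_ofPred_eq, Set.mem_Icc]

lemma subrect_subset_rect (P : MPart a b) (J : ∀ i, Fin (P i).N) : subrect P J ⊆ Rect a b :=
  fun _ hx i => ⟨le1_iff_le.2 (((P i).pts_mem_Icc _).1.trans (mem_subrect_iff.1 hx i).1),
    le1_iff_le.2 ((mem_subrect_iff.1 hx i).2.trans ((P i).pts_mem_Icc _).2)⟩

def cellOverlap (P Q : MPart a b) (J : ∀ i, Fin (P i).N) (K : ∀ i, Fin (Q i).N) : D :=
  ∏ i, intervalOverlap ((P i).pts (J i).castSucc) ((P i).pts (J i).succ)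
    ((Q i).pts (K i).castSucc) ((Q i).pts (K i).succ)

lemma cellOverlap_nonneg (P Q : MPart a b) (J : ∀ i, Fin (P i).N) (K : ∀ i, Fin (Q i).N) :
    0 ≤ cellOverlap P Q J K :=
  prod_nonneg fun _ _ => intervalOverlap_nonneg _ _ _ _

lemma cellOverlap_comm (P Q : MPart a b) (J : ∀ i, Fin (P i).N) (K : ∀ i, Fin (Q i).N) :
    cellOverlap P Q J K = cellOverlap Q P K J := by
  simp only [cellOverlap, intervalOverlap_comm]

lemma sum_cellOverlap (P Q : MPart a b) (J : ∀ i, Fin (P i).N) :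
    ∑ K, cellOverlap P Q J K = vol P J := by
  have hcoord : ∀ i, ∑ k : Fin (Q i).N, intervalOverlap ((P i).pts (J i).castSucc)
      ((P i).pts (J i).succ) ((Q i).pts k.castSucc) ((Q i).pts k.succ) =
      (P i).pts (J i).succ - (P i).pts (J i).castSucc := fun i =>
    sum_intervalOverlap (Q i).monotone_pts ((Q i).first.le.trans ((P i).pts_mem_Icc _).1)
      (lt1_iff_lt.1 ((P i).mono _)).le (((P i).pts_mem_Icc _).2.trans (Q i).last.symm.le)
  simp only [vol, ← hcoord, Fintype.prod_sum]
  rfl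

lemma nonempty_subrect_inter_of_cellOverlap_ne_zero {P Q : MPart a b} {J : ∀ i, Fin (P i).N}
    {K : ∀ i, Fin (Q i).N} (h : cellOverlap P Q J K ≠ 0) :
    (subrect P J ∩ subrect Q K).Nonempty := by
  choose x hx using fun i => nonempty_Icc_inter_of_intervalOverlap_ne_zero
    fun h0 => h (prod_eq_zero (mem_univ i) h0)
  exact ⟨x, mem_subrect_iff.2 fun i => (hx i).1, mem_subrect_iff.2 fun i => (hx i).2⟩

end Subrectangles

section DualBounds

variable {X : Type*} (f : X → D)

def dualInf (S : Set X) : D :=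
  TrivSqZeroExt.inl (sInf ((fun x => (f x).fst) '' S)) +
    TrivSqZeroExt.inr (sInf ((fun x => (f x).snd) '' S))

def dualSup (S : Set X) : D :=
  TrivSqZeroExt.inl (sSup ((fun x => (f x).fst) '' S)) +
    TrivSqZeroExt.inr (sSup ((fun x => (f x).snd) '' S))

variable {f} {U S T : Set X} {m M : ℝ}

lemma sInf_image_le_sSup_image_of_mem {g : X → ℝ} (hbd : ∀ x ∈ U, m ≤ g x ∧ g x ≤ M)
    (hS : S ⊆ U) (hT : T ⊆ U) {x : X} (hxS : x ∈ S) (hxT : x ∈ T) :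
    sInf (g '' S) ≤ sSup (g '' T) :=
  (csInf_le ⟨m, Set.forall_mem_image.2 fun y hy => (hbd y (hS hy)).1⟩ ⟨x, hxS, rfl⟩).trans
    (le_csSup ⟨M, Set.forall_mem_image.2 fun y hy => (hbd y (hT hy)).2⟩ ⟨x, hxT, rfl⟩)

lemma dualInf_le_dualSup_of_mem
    (hbd : ∀ x ∈ U, m ≤ (f x).fst ∧ (f x).fst ≤ M ∧ m ≤ (f x).snd ∧ (f x).snd ≤ M)
    (hS : S ⊆ U) (hT : T ⊆ U) {x : X} (hxS : x ∈ S) (hxT : x ∈ T) :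
    dualInf f S ≤ dualSup f T := by
  refine DualNumber.le_of_fst_le_of_snd_le ?_ ?_ <;> simp only [dualInf, dualSup,
    TrivSqZeroExt.fst_add, TrivSqZeroExt.fst_inl, TrivSqZeroExt.fst_inr, TrivSqZeroExt.snd_add,
    TrivSqZeroExt.snd_inl, TrivSqZeroExt.snd_inr, add_zero, zero_add]
  · exact sInf_image_le_sSup_image_of_mem (fun x hx => ⟨(hbd x hx).1, (hbd x hx).2.1⟩)
      hS hT hxS hxT
  · exact sInf_image_le_sSup_image_of_mem (fun x hx => ⟨(hbd x hx).2.2.1, (hbd x hx).2.2.2⟩)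
      hS hT hxS hxT

end DualBounds

theorem lower_le_upper_general {n : ℕ} (a b : Fin n → D)
    (f : (Fin n → D) → D)
    (hbd : ∃ m M : ℝ, ∀ x ∈ Rect a b,
      m ≤ (f x).fst ∧ (f x).fst ≤ M ∧ m ≤ (f x).snd ∧ (f x).snd ≤ M)
    (P Q : MPart a b) :
    le1 (L1 P f) (U1 Q f) := by
  obtain ⟨m, M, hmM⟩ := hbd
  rw [le1_iff_le]
  show ∑ J, dualInf f (subrect P J) * vol P J ≤ ∑ K, dualSup f (subrect Q K) * vol Q K
  refine sum_mul_le_sum_mul_of_coupling (cellOverlap P Q) (cellOverlap_nonneg P Q)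
    (sum_cellOverlap P Q) (fun K => ?_) fun J K hJK => ?_
  · simp_rw [cellOverlap_comm P Q _ K]
    exact sum_cellOverlap Q P K
  · obtain ⟨x, hxP, hxQ⟩ := nonempty_subrect_inter_of_cellOverlap_ne_zero hJK
    exact dualInf_le_dualSup_of_mem hmM (subrect_subset_rect P J) (subrect_subset_rect Q K)
      hxP hxQ

/-- Every type 1 lower sum is type-1 ≤ every type 1 upper sum. -/
theorem lower_le_upper {n : ℕ} (a b : Fin n → D) (hab : ∀ i, lt1 (a i) (b i))
    (f : (Fin n → D) → D)
    (hbd : ∃ m M : ℝ, ∀ x ∈ Rect a b,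
      m ≤ (f x).fst ∧ (f x).fst ≤ M ∧ m ≤ (f x).snd ∧ (f x).snd ≤ M)
    (P Q : MPart a b) :
    le1 (L1 P f) (U1 Q f) :=
  lower_le_upper_general a b f hbd P Q
end
end
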